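/- (FO,L_S)-separability coincides with projective (FO,L_S)-separability for every fragment L_S of FO containing all UCQs: a labeled FO-KB is projectively L_S-separable iff it is non-projectively L_S-separable. Moreover, for any two fragments L_S and L_S' of FO each containing all UCQs, a labeled FO-KB is L_S-separable iff it is L_S'-separable. -/

import Mathlib

namespace Sep

/-! ## First-order syntax over relation symbols (arity, code) and variables ℕ.
Constants are natural numbers; formulas contain no constants. -/

inductive Fml : Type where
  | eq : ℕ → ℕ → Fml
  | rel : (k : ℕ) → ℕ → (Fin k → ℕ) → Fml
  | neg : Fml → Fml
  | and : Fml → Fml → Fml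
  | or : Fml → Fml → Fml
  | ex : ℕ → Fml → Fml
  | all : ℕ → Fml → Fml

namespace Fml

/-- Implication, as an abbreviation. -/
def imp (φ ψ : Fml) : Fml := .or (.neg φ) ψ

/-- Free variables of a formula. -/
def free : Fml → Set ℕ
  | eq x y => {x, y}
  | rel _ _ v => Set.range v
  | neg φ => φ.free
  | and φ ψ => φ.free ∪ ψ.free
  | or φ ψ => φ.free ∪ ψ.free
  | ex y φ => φ.free \ {y}
  | all y φ => φ.free \ {y}

/-- All variables (free or bound) occurring in a formula. -/
def vars : Fml → Set ℕ
  | eq x y => {x, y}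
  | rel _ _ v => Set.range v
  | neg φ => φ.vars
  | and φ ψ => φ.vars ∪ ψ.vars
  | or φ ψ => φ.vars ∪ ψ.vars
  | ex y φ => insert y φ.vars
  | all y φ => insert y φ.vars

/-- Variables occurring in equality atoms of a formula. -/
def eqVars : Fml → Set ℕ
  | eq x y => {x, y}
  | rel _ _ _ => ∅
  | neg φ => φ.eqVars
  | and φ ψ => φ.eqVars ∪ ψ.eqVars
  | or φ ψ => φ.eqVars ∪ ψ.eqVars
  | ex _ φ => φ.eqVars
  | all _ φ => φ.eqVars

/-- The signature (set of relation symbols, as pairs (arity, code)) of a formula. -/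
def sig : Fml → Set (ℕ × ℕ)
  | eq _ _ => ∅
  | rel k R _ => {(k, R)}
  | neg φ => φ.sig
  | and φ ψ => φ.sig ∪ ψ.sig
  | or φ ψ => φ.sig ∪ ψ.sig
  | ex _ φ => φ.sig
  | all _ φ => φ.sig

/-- Size of a formula (number of symbols, names counting as one symbol). -/
def size : Fml → ℕ
  | eq _ _ => 3
  | rel k _ _ => 1 + k
  | neg φ => 1 + φ.size
  | and φ ψ => 1 + φ.size + ψ.size
  | or φ ψ => 1 + φ.size + ψ.size
  | ex _ φ => 2 + φ.size
  | all _ φ => 2 + φ.size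

/-- Subformulas of a formula. -/
def subfmls : Fml → Set Fml
  | eq x y => {.eq x y}
  | rel k R v => {.rel k R v}
  | neg φ => insert (.neg φ) φ.subfmls
  | and φ ψ => insert (.and φ ψ) (φ.subfmls ∪ ψ.subfmls)
  | or φ ψ => insert (.or φ ψ) (φ.subfmls ∪ ψ.subfmls)
  | ex y φ => insert (.ex y φ) φ.subfmls
  | all y φ => insert (.all y φ) φ.subfmls

end Fml

/-- Conjunction of a list of formulas (`x₀ = x₀` as the empty conjunction). -/
def bigAnd : List Fml → Fml
  | [] => .eq 0 0
  | [φ] => φ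
  | φ :: ψ :: rest => .and φ (bigAnd (ψ :: rest))

/-- Disjunction of a list of formulas. -/
def bigOr : List Fml → Fml
  | [] => .neg (.eq 0 0)
  | [φ] => φ
  | φ :: ψ :: rest => .or φ (bigOr (ψ :: rest))

/-- Existential quantification over a list of variables. -/
def exList (ys : List ℕ) (φ : Fml) : Fml := ys.foldr Fml.ex φ

/-- Universal quantification over a list of variables. -/
def allList (ys : List ℕ) (φ : Fml) : Fml := ys.foldr Fml.all φ

/-- The atom `R(x₀,…,x_{k-1})` over the fixed tuple of distinct variables `0,…,k-1`. -/
def baseAtom (k R : ℕ) : Fml := .rel k R fun i => (i : ℕ)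

/-- The formula `∃ y⃗₁ (R(x⃗_k) ∧ ¬ x_u = x_w)` where `y⃗₁` is `x⃗_k` without `x_u`. -/
def connFml (k R u w : ℕ) : Fml :=
  exList ((List.range k).filter fun y => y != u) (.and (baseAtom k R) (.neg (.eq u w)))

/-! ## Structures and satisfaction -/

/-- A relational structure: a nonempty domain, interpretations of all relation
symbols, and interpretations of all constants (no unique name assumption). -/
structure Str : Type 1 where
  Dom : Type
  dom_nonempty : Nonempty Dom
  rel : (k : ℕ) → ℕ → (Fin k → Dom) → Prop
  const : ℕ → Dom

namespace Fml

/-- Satisfaction of a formula in a structure under a variable assignment. -/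
def Sat (A : Str) : Fml → (ℕ → A.Dom) → Prop
  | eq x y, v => v x = v y
  | rel k R args, v => A.rel k R fun i => v (args i)
  | neg φ, v => ¬ φ.Sat A v
  | and φ ψ, v => φ.Sat A v ∧ ψ.Sat A v
  | or φ ψ, v => φ.Sat A v ∨ ψ.Sat A v
  | ex y φ, v => ∃ d : A.Dom, φ.Sat A (Function.update v y d)
  | all y φ, v => ∀ d : A.Dom, φ.Sat A (Function.update v y d)

/-- Satisfaction relativized to a subset of the domain (quantifiers range over the subset). -/
def SatIn (A : Str) (Dsub : Set A.Dom) : Fml → (ℕ → A.Dom) → Prop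
  | eq x y, v => v x = v y
  | rel k R args, v => A.rel k R fun i => v (args i)
  | neg φ, v => ¬ φ.SatIn A Dsub v
  | and φ ψ, v => φ.SatIn A Dsub v ∧ ψ.SatIn A Dsub v
  | or φ ψ, v => φ.SatIn A Dsub v ∨ ψ.SatIn A Dsub v
  | ex y φ, v => ∃ d ∈ Dsub, φ.SatIn A Dsub (Function.update v y d)
  | all y φ, v => ∀ d ∈ Dsub, φ.SatIn A Dsub (Function.update v y d)

end Fml


/-! ## Databases and knowledge bases -/

/-- A ground atom `R(a⃗)` over constants (natural numbers). -/
structure Atom : Type where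
  arity : ℕ
  rel : ℕ
  args : Fin arity → ℕ

/-- Rename the constants of an atom. -/
def Atom.mapC (f : ℕ → ℕ) (a : Atom) : Atom := ⟨a.arity, a.rel, f ∘ a.args⟩

/-- An atom holds in a structure under an interpretation of the constants. -/
def Atom.Holds (a : Atom) (A : Str) (h : ℕ → A.Dom) : Prop :=
  A.rel a.arity a.rel fun i => h (a.args i)

/-- A database: a finite set of ground atoms. -/
structure Database : Type where
  atoms : Set Atom
  finite : atoms.Finite

/-- The constants occurring in a database. -/
def Database.consts (D : Database) : Set ℕ := ⋃ a ∈ D.atoms, Set.range a.args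

lemma Database.consts_finite (D : Database) : D.consts.Finite :=
  D.finite.biUnion fun _ _ => Set.finite_range _

/-- Number of constants of a database (used as its size `|D|`). -/
noncomputable def Database.csize (D : Database) : ℕ := D.consts.ncard

/-- The signature of a database. -/
def Database.sig (D : Database) : Set (ℕ × ℕ) := (fun a => (a.arity, a.rel)) '' D.atoms

/-- Two constants are adjacent in the Gaifman graph of a database. -/
def Database.adj (D : Database) (c d : ℕ) : Prop :=
  ∃ a ∈ D.atoms, c ∈ Set.range a.args ∧ d ∈ Set.range a.args

/-- Restriction of a database to the atoms containing a constant reachable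
from the set `S` in the Gaifman graph. -/
def Database.conRestrictSet (D : Database) (S : Set ℕ) : Database where
  atoms := {a | a ∈ D.atoms ∧ ∃ c ∈ S, ∃ d ∈ Set.range a.args, Relation.ReflTransGen D.adj c d}
  finite := D.finite.subset fun _ ha => ha.1

/-- `D_{con(a⃗)}`: restriction of `D` to the constants reachable from `[a⃗]`. -/
def Database.conRestrict (D : Database) {n : ℕ} (t : Fin n → ℕ) : Database :=
  D.conRestrictSet (Set.range t)

/-- A knowledge base: a finite ontology (set of formulas) and a database. -/
structure KB : Type where
  onto : Set Fml
  onto_finite : onto.Finite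
  db : Database

/-- The signature of a KB. -/
def KB.sig (K : KB) : Set (ℕ × ℕ) := (⋃ φ ∈ K.onto, φ.sig) ∪ K.db.sig

/-- Size of the ontology of a KB. -/
noncomputable def KB.ontoSize (K : KB) : ℕ := K.onto_finite.toFinset.sum Fml.size

/-- A structure is a model of a KB if it satisfies every sentence of the
ontology and every ground atom of the database. -/
def Str.IsModel (A : Str) (K : KB) : Prop :=
  (∀ φ ∈ K.onto, ∀ v : ℕ → A.Dom, φ.Sat A v) ∧ ∀ a ∈ K.db.atoms, a.Holds A A.const

/-- Satisfiability of a KB. -/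
def KB.Satisfiable (K : KB) : Prop := ∃ A : Str, A.IsModel K

/-- `K ⊨ φ(t⃗)`: every model of `K` satisfies `φ` at the tuple of constants `t⃗`. -/
def KB.entails (K : KB) {n : ℕ} (φ : Fml) (t : Fin n → ℕ) : Prop :=
  ∀ A : Str, A.IsModel K → ∀ v : ℕ → A.Dom, (∀ i : Fin n, v i.1 = A.const (t i)) → φ.Sat A v

/-! ## Separability -/

/-- `φ(x₀,…,x_{n-1})` (weakly) separates `(K, P, N)`. -/
def Separates {n : ℕ} (K : KB) (P N : Set (Fin n → ℕ)) (φ : Fml) : Prop :=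
  (∀ m ∈ φ.free, m < n) ∧ (∀ a ∈ P, K.entails φ a) ∧ ∀ b ∈ N, ¬ K.entails φ b

/-- `φ(x₀,…,x_{n-1})` strongly separates `(K, P, N)`. -/
def StronglySeparates {n : ℕ} (K : KB) (P N : Set (Fin n → ℕ)) (φ : Fml) : Prop :=
  (∀ m ∈ φ.free, m < n) ∧ (∀ a ∈ P, K.entails φ a) ∧ ∀ b ∈ N, K.entails (Fml.neg φ) b

/-- Projective separability in a language `L` (arbitrary helper symbols allowed). -/
def ProjSeparable (L : Set Fml) {n : ℕ} (K : KB) (P N : Set (Fin n → ℕ)) : Prop :=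
  ∃ φ ∈ L, Separates K P N φ

/-- Non-projective separability in a language `L` (only symbols of `sig(K)`). -/
def NonProjSeparable (L : Set Fml) {n : ℕ} (K : KB) (P N : Set (Fin n → ℕ)) : Prop :=
  ∃ φ ∈ L, φ.sig ⊆ K.sig ∧ Separates K P N φ

/-- Projective strong separability in a language `L`. -/
def ProjStronglySeparable (L : Set Fml) {n : ℕ} (K : KB) (P N : Set (Fin n → ℕ)) : Prop :=
  ∃ φ ∈ L, StronglySeparates K P N φ

/-- Non-projective strong separability in a language `L`. -/
def NonProjStronglySeparable (L : Set Fml) {n : ℕ} (K : KB) (P N : Set (Fin n → ℕ)) : Prop :=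
  ∃ φ ∈ L, φ.sig ⊆ K.sig ∧ StronglySeparates K P N φ

/-- A fragment of FO: a set of formulas closed under conjunction. -/
def IsFragment (L : Set Fml) : Prop := ∀ φ ∈ L, ∀ ψ ∈ L, Fml.and φ ψ ∈ L

/-! ## Homomorphisms from databases to structures -/

/-- `h` is a homomorphism from the database `D` into the structure `A`
(constants need not be preserved). -/
def DbHom (D : Database) (A : Str) (h : ℕ → A.Dom) : Prop :=
  ∀ a ∈ D.atoms, a.Holds A h

/-- `D,t⃗ → A,g⃗`: a homomorphism of pointed structures. -/
def PointedHom (D : Database) {n : ℕ} (t : Fin n → ℕ) (A : Str) (g : Fin n → A.Dom) : Prop :=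
  ∃ h : ℕ → A.Dom, DbHom D A h ∧ ∀ i : Fin n, h (t i) = g i

/-! ## The canonical CQ of a pointed database -/

/-- The variable associated with a constant `c` by the canonical CQ of `(D, t⃗)`:
the least answer variable `i` with `t i = c` if it exists, otherwise `n + c`. -/
noncomputable def varOf {n : ℕ} (t : Fin n → ℕ) (c : ℕ) : ℕ :=
  if ∃ i : Fin n, t i = c then sInf {m : ℕ | ∃ h : m < n, t ⟨m, h⟩ = c} else n + c

lemma Database.qvars_finite (D : Database) {n : ℕ} (t : Fin n → ℕ) :
    (D.consts \ Set.range t).Finite :=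
  D.consts_finite.subset Set.diff_subset

/-- The canonical CQ `φ_{D,t⃗}(x₀,…,x_{n-1})` of a pointed database. -/
noncomputable def canonCQ (D : Database) {n : ℕ} (t : Fin n → ℕ) : Fml :=
  exList ((D.qvars_finite t).toFinset.toList.map fun c => n + c)
    (bigAnd
      ((D.finite.toFinset.toList.map fun a =>
          Fml.rel a.arity a.rel fun i => varOf t (a.args i))
        ++
       ((List.finRange n ×ˢ List.finRange n).filterMap fun p =>
          if t p.1 = t p.2 then some (Fml.eq p.1.1 p.2.1) else none)))

/-- The canonical UCQ `⋁_{a⃗ ∈ P} φ_{D_{con(a⃗)},a⃗}`. -/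
noncomputable def canonUCQ (K : KB) {n : ℕ} (P : Set (Fin n → ℕ)) (hP : P.Finite) : Fml :=
  bigOr (hP.toFinset.toList.map fun t => canonCQ (K.db.conRestrict t) t)

/-! ## The merged database `D_{a⃗ = b⃗}` -/

/-- Equivalence identifying (the code of) `a i` with (the code of) the copy of `b i`. -/
def mergeEquiv {n : ℕ} (a b : Fin n → ℕ) : ℕ → ℕ → Prop :=
  Relation.ReflTransGen fun x y =>
    (∃ i : Fin n, x = 2 * a i ∧ y = 2 * b i + 1) ∨ ∃ i : Fin n, y = 2 * a i ∧ x = 2 * b i + 1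

/-- Canonical representative of the equivalence class. -/
noncomputable def mergeRep {n : ℕ} (a b : Fin n → ℕ) (x : ℕ) : ℕ :=
  sInf {y | mergeEquiv a b x y}

/-- `D_{a⃗ = b⃗}`: the union of `D` with a disjoint copy of itself in which
`a i` is identified with the copy of `b i`, for every `i`. -/
noncomputable def Database.merge (D : Database) {n : ℕ} (a b : Fin n → ℕ) : Database where
  atoms := (Atom.mapC (fun c => mergeRep a b (2 * c)) '' D.atoms) ∪
           (Atom.mapC (fun c => mergeRep a b (2 * c + 1)) '' D.atoms)
  finite := (D.finite.image _).union (D.finite.image _)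


/-! ## Fragments of FO -/

/-- Atomic formulas: equalities and relational atoms. -/
inductive IsAtomic : Fml → Prop
  | eq (x y : ℕ) : IsAtomic (.eq x y)
  | rel (k R : ℕ) (v : Fin k → ℕ) : IsAtomic (.rel k R v)

/-- Relational atoms. -/
inductive IsRelAtom : Fml → Prop
  | rel (k R : ℕ) (v : Fin k → ℕ) : IsRelAtom (.rel k R v)

/-- Conjunctions of atomic formulas. -/
inductive IsQFConj : Fml → Prop
  | atom {φ : Fml} : IsAtomic φ → IsQFConj φ
  | and {φ ψ : Fml} : IsQFConj φ → IsQFConj ψ → IsQFConj (.and φ ψ)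

/-- Conjunctive queries: existentially quantified conjunctions of relational
atoms and equalities between free variables. -/
inductive IsCQ : Fml → Prop
  | base {φ : Fml} : IsQFConj φ → IsCQ φ
  | ex {φ : Fml} (y : ℕ) : IsCQ φ → y ∉ φ.eqVars → IsCQ (.ex y φ)

/-- Unions of conjunctive queries: disjunctions of CQs with the same free variables. -/
inductive IsUCQ : Fml → Prop
  | cq {φ : Fml} : IsCQ φ → IsUCQ φ
  | or {φ ψ : Fml} : IsUCQ φ → IsUCQ ψ → φ.free = ψ.free → IsUCQ (.or φ ψ)

def UCQs : Set Fml := {φ | IsUCQ φ}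

/-- The guarded fragment GF. -/
inductive IsGF : Fml → Prop
  | eq (x y : ℕ) : IsGF (.eq x y)
  | rel (k R : ℕ) (v : Fin k → ℕ) : IsGF (.rel k R v)
  | neg {φ : Fml} : IsGF φ → IsGF (.neg φ)
  | and {φ ψ : Fml} : IsGF φ → IsGF ψ → IsGF (.and φ ψ)
  | or {φ ψ : Fml} : IsGF φ → IsGF ψ → IsGF (.or φ ψ)
  | exg (ys : List ℕ) {α φ : Fml} : IsAtomic α → IsGF φ → φ.free ⊆ α.free →
      (∀ y ∈ ys, y ∈ α.free) → IsGF (exList ys (.and α φ))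
  | allg (ys : List ℕ) {α φ : Fml} : IsAtomic α → IsGF φ → φ.free ⊆ α.free →
      (∀ y ∈ ys, y ∈ α.free) → IsGF (allList ys (α.imp φ))

def GFs : Set Fml := {φ | IsGF φ}

/-- The open guarded fragment openGF: all subformulas are open and equality is
never used as a guard. -/
inductive IsOpenGF : Fml → Prop
  | eq (x y : ℕ) : IsOpenGF (.eq x y)
  | rel (k R : ℕ) (v : Fin k → ℕ) : 0 < k → IsOpenGF (.rel k R v)
  | neg {φ : Fml} : IsOpenGF φ → IsOpenGF (.neg φ)
  | and {φ ψ : Fml} : IsOpenGF φ → IsOpenGF ψ → IsOpenGF (.and φ ψ)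
  | or {φ ψ : Fml} : IsOpenGF φ → IsOpenGF ψ → IsOpenGF (.or φ ψ)
  | exg (ys : List ℕ) {α φ : Fml} : IsRelAtom α → IsOpenGF φ → φ.free ⊆ α.free →
      (∀ y ∈ ys, y ∈ α.free) → ((Fml.and α φ).free \ {y | y ∈ ys}).Nonempty →
      IsOpenGF (exList ys (.and α φ))
  | allg (ys : List ℕ) {α φ : Fml} : IsRelAtom α → IsOpenGF φ → φ.free ⊆ α.free →
      (∀ y ∈ ys, y ∈ α.free) → ((α.imp φ).free \ {y | y ∈ ys}).Nonempty →
      IsOpenGF (allList ys (α.imp φ))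

def OpenGFs : Set Fml := {φ | IsOpenGF φ}

/-- The guarded negation fragment GNFO. -/
inductive IsGNFO : Fml → Prop
  | eq (x y : ℕ) : IsGNFO (.eq x y)
  | rel (k R : ℕ) (v : Fin k → ℕ) : IsGNFO (.rel k R v)
  | and {φ ψ : Fml} : IsGNFO φ → IsGNFO ψ → IsGNFO (.and φ ψ)
  | or {φ ψ : Fml} : IsGNFO φ → IsGNFO ψ → IsGNFO (.or φ ψ)
  | ex (y : ℕ) {φ : Fml} : IsGNFO φ → IsGNFO (.ex y φ)
  | gneg {α φ : Fml} : IsAtomic α → IsGNFO φ → φ.free ⊆ α.free → IsGNFO (.and α (.neg φ))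

def GNFOs : Set Fml := {φ | IsGNFO φ}

/-- The two-variable fragment FO²: only the two fixed variables `0` and `1` are used. -/
def FO2s : Set Fml := {φ : Fml | φ.vars ⊆ {0, 1}}

/-- Two variables are adjacent in the Gaifman graph of a formula (they co-occur
in an atom of the formula). -/
def Fml.varAdj (φ : Fml) (x y : ℕ) : Prop :=
  ∃ ψ ∈ φ.subfmls, IsAtomic ψ ∧ x ∈ ψ.free ∧ y ∈ ψ.free

/-- A rooted CQ: every variable is reachable from an answer (free) variable in
the Gaifman graph of the CQ. -/
def IsRootedCQ (φ : Fml) : Prop :=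
  IsCQ φ ∧ ∀ x ∈ φ.vars, ∃ u ∈ φ.free, Relation.ReflTransGen φ.varAdj u x

/-- Rooted UCQs. -/
inductive IsRootedUCQ : Fml → Prop
  | cq {φ : Fml} : IsRootedCQ φ → IsRootedUCQ φ
  | or {φ ψ : Fml} : IsRootedUCQ φ → IsRootedUCQ ψ → φ.free = ψ.free → IsRootedUCQ (.or φ ψ)

/-! ## ALCI concepts -/

/-- ALCI concepts: `⊤`, concept names, `¬`, `⊓`, and `∃R.C`/`∃R⁻.C`
(the Boolean indicates an inverse role). -/
inductive Concept : Type where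
  | top : Concept
  | atom : ℕ → Concept
  | neg : Concept → Concept
  | inter : Concept → Concept → Concept
  | exRole : Bool → ℕ → Concept → Concept

namespace Concept

/-- Extension of a concept in a structure. -/
def interp (A : Str) : Concept → Set A.Dom
  | top => Set.univ
  | atom c => {d | A.rel 1 c ![d]}
  | neg C => (C.interp A)ᶜ
  | inter C D => C.interp A ∩ D.interp A
  | exRole inv R C => {d | ∃ e ∈ C.interp A, if inv then A.rel 2 R ![e, d] else A.rel 2 R ![d, e]}

/-- Signature of a concept. -/
def csig : Concept → Set (ℕ × ℕ)
  | top => ∅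
  | atom c => {(1, c)}
  | neg C => C.csig
  | inter C D => C.csig ∪ D.csig
  | exRole _ R C => insert (2, R) C.csig

/-- Size of a concept. -/
def size : Concept → ℕ
  | top => 1
  | atom _ => 1
  | neg C => 1 + C.size
  | inter C D => 1 + C.size + D.size
  | exRole _ _ C => 2 + C.size

/-- Subconcepts of a concept. -/
def subconcepts : Concept → Set Concept
  | top => {top}
  | atom c => {atom c}
  | neg C => insert (neg C) C.subconcepts
  | inter C D => insert (inter C D) (C.subconcepts ∪ D.subconcepts)
  | exRole i R C => insert (exRole i R C) C.subconcepts

/-- The standard translation of a concept into an FO formula with free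
variable `x ∈ {0,1}` (the other of the two variables is `1 - x`). -/
def toFml : Concept → ℕ → Fml
  | top, x => .eq x x
  | atom c, x => .rel 1 c ![x]
  | neg C, x => .neg (C.toFml x)
  | inter C D, x => .and (C.toFml x) (D.toFml x)
  | exRole inv R C, x =>
      .ex (1 - x) (.and (if inv then Fml.rel 2 R ![1 - x, x] else Fml.rel 2 R ![x, 1 - x])
        (C.toFml (1 - x)))

end Concept

/-- ALCI concepts, viewed as FO formulas in the free variable `x₀`. -/
def ALCIs : Set Fml := {φ | ∃ C : Concept, φ = C.toFml 0}


/-! ## ALCI knowledge bases, types, bisimulations -/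

/-- The FO translation `∀x₀∀x₁ (C(x₀) → D(x₀))` of a concept inclusion. -/
def CIfml (p : Concept × Concept) : Fml :=
  .all 1 (.all 0 ((p.1.toFml 0).imp (p.2.toFml 0)))

/-- An ALCI knowledge base: a finite set of concept inclusions together with a
database containing only unary and binary atoms. -/
structure ALCIKB : Type where
  onto : Set (Concept × Concept)
  onto_finite : onto.Finite
  db : Database
  db_arity : ∀ a ∈ db.atoms, a.arity = 1 ∨ a.arity = 2

/-- The underlying FO knowledge base of an ALCI KB. -/
def ALCIKB.toKB (K : ALCIKB) : KB where
  onto := CIfml '' K.onto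
  onto_finite := K.onto_finite.image _
  db := K.db

/-- Signature of an ALCI KB. -/
def ALCIKB.sigK (K : ALCIKB) : Set (ℕ × ℕ) := K.toKB.sig

/-- Size of the ontology of an ALCI KB. -/
noncomputable def ALCIKB.ontoSize (K : ALCIKB) : ℕ :=
  K.onto_finite.toFinset.sum fun p => p.1.size + p.2.size + 1

/-- `cl(K)`: the concepts occurring in `K` together with `∃R.⊤`, `∃R⁻.⊤` for all
role names of `sig(K)`, closed under subconcepts and single negation. -/
def ALCIKB.cl (K : ALCIKB) : Set Concept :=
  ((⋃ p ∈ K.onto, p.1.subconcepts ∪ p.2.subconcepts) ∪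
     (⋃ C ∈ {C : Concept | ∃ a ∈ K.db.atoms, a.arity = 1 ∧ C = Concept.atom a.rel}, C.subconcepts) ∪
     (⋃ C ∈ {C : Concept | ∃ R i, ((2 : ℕ), R) ∈ K.sigK ∧ C = Concept.exRole i R Concept.top},
        C.subconcepts)) ∪
  Concept.neg ''
    ((⋃ p ∈ K.onto, p.1.subconcepts ∪ p.2.subconcepts) ∪
     (⋃ C ∈ {C : Concept | ∃ a ∈ K.db.atoms, a.arity = 1 ∧ C = Concept.atom a.rel}, C.subconcepts) ∪
     (⋃ C ∈ {C : Concept | ∃ R i, ((2 : ℕ), R) ∈ K.sigK ∧ C = Concept.exRole i R Concept.top},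
        C.subconcepts))

/-- `tp_K(A, d)`: the `K`-type of `d` in `A`. -/
def ALCIKB.tp (K : ALCIKB) (A : Str) (d : A.Dom) : Set Concept :=
  {C | C ∈ K.cl ∧ d ∈ C.interp A}

/-- `t` is a `K`-type: it is realized in some model of `K`. -/
def ALCIKB.IsType (K : ALCIKB) (t : Set Concept) : Prop :=
  ∃ A : Str, A.IsModel K.toKB ∧ ∃ d : A.Dom, K.tp A d = t

/-- `t` is realizable in `K, b`. -/
def ALCIKB.RealizableAt (K : ALCIKB) (b : ℕ) (t : Set Concept) : Prop :=
  ∃ A : Str, A.IsModel K.toKB ∧ K.tp A (A.const b) = t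

/-- A type is connected if it contains `∃R.⊤` for some role `R`. -/
def TypeConnected (t : Set Concept) : Prop :=
  ∃ i R, Concept.exRole i R Concept.top ∈ t

/-- `ρ = (inv, R)` is a role (a role name or its inverse); `roleHolds A ρ d e`
says that `(d, e)` is in the extension of the role. -/
def roleHolds (A : Str) (ρ : Bool × ℕ) (d e : A.Dom) : Prop :=
  if ρ.1 then A.rel 2 ρ.2 ![e, d] else A.rel 2 ρ.2 ![d, e]

/-- `S` is a Σ-bisimulation (for ALCI) between `A` and `B`. -/
structure IsALCIBisim (sg : Set (ℕ × ℕ)) (A B : Str) (S : Set (A.Dom × B.Dom)) : Prop where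
  atom : ∀ p ∈ S, ∀ c : ℕ, (1, c) ∈ sg → (A.rel 1 c ![p.1] ↔ B.rel 1 c ![p.2])
  forth : ∀ p ∈ S, ∀ ρ : Bool × ℕ, (2, ρ.2) ∈ sg →
    ∀ d' : A.Dom, roleHolds A ρ p.1 d' → ∃ e' : B.Dom, roleHolds B ρ p.2 e' ∧ (d', e') ∈ S
  back : ∀ p ∈ S, ∀ ρ : Bool × ℕ, (2, ρ.2) ∈ sg →
    ∀ e' : B.Dom, roleHolds B ρ p.2 e' → ∃ d' : A.Dom, roleHolds A ρ p.1 d' ∧ (d', e') ∈ S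

/-- `A,d ∼_{ALCI,Σ} B,e`. -/
def ALCIBisimilar (sg : Set (ℕ × ℕ)) (A : Str) (d : A.Dom) (B : Str) (e : B.Dom) : Prop :=
  ∃ S : Set (A.Dom × B.Dom), IsALCIBisim sg A B S ∧ (d, e) ∈ S

/-- A `K`-type `t` is ALCI-complete. -/
def ALCIKB.TypeComplete (K : ALCIKB) (t : Set Concept) : Prop :=
  ∀ A B : Str, A.IsModel K.toKB → B.IsModel K.toKB → ∀ (d : A.Dom) (e : B.Dom),
    K.tp A d = t → K.tp B e = t → ALCIBisimilar K.sigK A d B e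

/-- `(K,P,N)` is strongly incomplete: no connected `K`-type realizable at some
negative example is ALCI-complete. -/
def ALCIKB.StronglyIncomplete (K : ALCIKB) (N : Set ℕ) : Prop :=
  ∀ t : Set Concept, TypeConnected t → (∃ b ∈ N, K.RealizableAt b t) → ¬ K.TypeComplete t

/-- `t₁ ⇝_ρ t₂`: the types are `ρ`-coherent. -/
def ALCIKB.Coherent (K : ALCIKB) (t₁ t₂ : Set Concept) (ρ : Bool × ℕ) : Prop :=
  ∃ A : Str, A.IsModel K.toKB ∧ ∃ d e : A.Dom, K.tp A d = t₁ ∧ K.tp A e = t₂ ∧ roleHolds A ρ d e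

/-- The sequence `t₀ ρ₀ … ρ_n t_{n+1}` witnesses ALCI-incompleteness of the type `t`. -/
def ALCIKB.WitSeq (K : ALCIKB) (t : Set Concept) (n : ℕ)
    (ts : Fin (n + 2) → Set Concept) (ρs : Fin (n + 1) → Bool × ℕ) : Prop :=
  1 ≤ n ∧
  ts 0 = t ∧
  (∀ i : Fin (n + 2), K.IsType (ts i)) ∧
  (∀ i : Fin (n + 1), ((2 : ℕ), (ρs i).2) ∈ K.sigK) ∧
  (∀ i : Fin (n + 1), K.Coherent (ts i.castSucc) (ts i.succ) (ρs i)) ∧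
  ∃ A : Str, A.IsModel K.toKB ∧ ∃ d e : A.Dom,
    roleHolds A (ρs ⟨n - 1, by omega⟩) d e ∧
    K.tp A d = ts ⟨n - 1, by omega⟩ ∧ K.tp A e = ts ⟨n, by omega⟩ ∧
    ¬ ∃ f : A.Dom, K.tp A f = ts ⟨n + 1, by omega⟩ ∧ roleHolds A (ρs ⟨n, by omega⟩) e f

/-! ### Weak and strong separability by ALCI concepts -/

/-- A concept `C` (weakly) separates `(K, P, N)`. -/
def ALCIKB.SeparatesC (K : ALCIKB) (P N : Set ℕ) (C : Concept) : Prop :=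
  (∀ a ∈ P, ∀ A : Str, A.IsModel K.toKB → A.const a ∈ C.interp A) ∧
  ∀ b ∈ N, ¬ ∀ A : Str, A.IsModel K.toKB → A.const b ∈ C.interp A

/-- A concept `C` strongly separates `(K, P, N)`. -/
def ALCIKB.StronglySeparatesC (K : ALCIKB) (P N : Set ℕ) (C : Concept) : Prop :=
  (∀ a ∈ P, ∀ A : Str, A.IsModel K.toKB → A.const a ∈ C.interp A) ∧
  ∀ b ∈ N, ∀ A : Str, A.IsModel K.toKB → A.const b ∉ C.interp A

/-- Non-projective ALCI-separability of a labeled ALCI KB. -/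
def ALCIKB.CSeparable (K : ALCIKB) (P N : Set ℕ) : Prop :=
  ∃ C : Concept, C.csig ⊆ K.sigK ∧ K.SeparatesC P N C

/-- Projective ALCI-separability of a labeled ALCI KB. -/
def ALCIKB.CProjSeparable (K : ALCIKB) (P N : Set ℕ) : Prop :=
  ∃ C : Concept, K.SeparatesC P N C

/-- Non-projective strong ALCI-separability of a labeled ALCI KB. -/
def ALCIKB.CStronglySeparable (K : ALCIKB) (P N : Set ℕ) : Prop :=
  ∃ C : Concept, C.csig ⊆ K.sigK ∧ K.StronglySeparatesC P N C

/-! ### ALCI(Σ)-embeddings -/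

/-- An ALCI(Σ)-embedding of a (unary/binary) database into a structure. -/
def ALCIEmbed (sg : Set (ℕ × ℕ)) (D : Database) (A : Str) (S : Set (ℕ × A.Dom)) : Prop :=
  (∀ p ∈ S, ∀ c : ℕ, (⟨1, c, ![p.1]⟩ : Atom) ∈ D.atoms → A.rel 1 c ![p.2]) ∧
  (∀ p ∈ S, ∀ q ∈ S, p.1 = q.1 → ALCIBisimilar sg A p.2 A q.2) ∧
  (∀ p ∈ S, ∀ R a', (⟨2, R, ![p.1, a']⟩ : Atom) ∈ D.atoms →
      ∃ b' : A.Dom, A.rel 2 R ![p.2, b'] ∧ (a', b') ∈ S) ∧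
  (∀ p ∈ S, ∀ R a', (⟨2, R, ![a', p.1]⟩ : Atom) ∈ D.atoms →
      ∃ b' : A.Dom, A.rel 2 R ![b', p.2] ∧ (a', b') ∈ S)

/-- `D,a ≼_Σ A,d`: some ALCI(Σ)-embedding contains `(a, d)`. -/
def ALCIEmbeddable (sg : Set (ℕ × ℕ)) (D : Database) (a : ℕ) (A : Str) (d : A.Dom) : Prop :=
  ∃ S : Set (ℕ × A.Dom), ALCIEmbed sg D A S ∧ (a, d) ∈ S

/-! ### Forest models -/

/-- There is a role edge from `d` to `e` (in either direction). -/
def Str.RoleEdge (A : Str) (d e : A.Dom) : Prop :=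
  ∃ R, A.rel 2 R ![d, e] ∨ A.rel 2 R ![e, d]

/-- `(d, e)` is an edge induced by a binary database atom. -/
def Str.DbEdge (A : Str) (K : ALCIKB) (d e : A.Dom) : Prop :=
  ∃ R x y, (⟨2, R, ![x, y]⟩ : Atom) ∈ K.db.atoms ∧ d = A.const x ∧ e = A.const y

/-- A role edge that is not induced by the database. -/
def Str.TreeEdge (A : Str) (K : ALCIKB) (d e : A.Dom) : Prop :=
  A.RoleEdge d e ∧ ¬ A.DbEdge K d e ∧ ¬ A.DbEdge K e d

/-- The graph of tree edges. -/
def Str.forestGraph (A : Str) (K : ALCIKB) : SimpleGraph A.Dom where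
  Adj d e := d ≠ e ∧ A.TreeEdge K d e
  symm := ⟨by
    rintro d e ⟨hne, ⟨R, hR⟩, h1, h2⟩
    exact ⟨hne.symm, ⟨R, hR.symm⟩, h2, h1⟩⟩
  loopless := ⟨fun d h => h.1 rfl⟩

/-- `A` is a forest model of the ALCI KB `K`: a model that is the disjoint union
of tree-shaped structures, one rooted at each `c^A` for `c ∈ cons(D)`, extended
with the edges induced by the binary database atoms. -/
def Str.IsForestModel (A : Str) (K : ALCIKB) : Prop :=
  A.IsModel K.toKB ∧
  (∀ k R t, A.rel k R t → k = 1 ∨ k = 2) ∧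
  (∀ d : A.Dom, A.RoleEdge d d → A.DbEdge K d d) ∧
  (A.forestGraph K).IsAcyclic ∧
  (∀ d : A.Dom, ∃ c ∈ K.db.consts, (A.forestGraph K).Reachable (A.const c) d) ∧
  (∀ c ∈ K.db.consts, ∀ c' ∈ K.db.consts, A.const c ≠ A.const c' →
      ¬ (A.forestGraph K).Reachable (A.const c) (A.const c'))

/-- `A` has finite outdegree. -/
def Str.FiniteOutdegree (A : Str) : Prop :=
  ∀ d : A.Dom, {e : A.Dom | A.RoleEdge d e}.Finite

/-! ## Guarded bisimulations -/

/-- A set of domain elements is guarded in a structure. -/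
def Str.GuardedSet (A : Str) (G : Set A.Dom) : Prop :=
  (∃ d, G = {d}) ∨ ∃ k R, ∃ t : Fin k → A.Dom, A.rel k R t ∧ G = Set.range t

/-- A tuple is guarded in a structure. -/
def Str.GuardedTuple (A : Str) {k : ℕ} (t : Fin k → A.Dom) : Prop :=
  ∃ G, A.GuardedSet G ∧ Set.range t ⊆ G

/-- `a⃗ ↦ b⃗` is a partial Σ-isomorphism. -/
def PartialIso (sg : Set (ℕ × ℕ)) (A B : Str) {k : ℕ}
    (a : Fin k → A.Dom) (b : Fin k → B.Dom) : Prop :=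
  (∀ i j, a i = a j ↔ b i = b j) ∧
  ∀ m R, (m, R) ∈ sg → ∀ f : Fin m → Fin k, (A.rel m R (a ∘ f) ↔ B.rel m R (b ∘ f))

/-- A pair of equally long tuples in two structures. -/
structure GPair (A B : Str) : Type where
  k : ℕ
  a : Fin k → A.Dom
  b : Fin k → B.Dom

/-- Forth condition; if `conn = true` it is only required for guarded tuples
overlapping the current one (connected guarded bisimulations). -/
def StepForth (conn : Bool) (A B : Str) (I : Set (GPair A B)) (p : GPair A B) : Prop :=
  ∀ (k' : ℕ) (a' : Fin k' → A.Dom), A.GuardedTuple a' →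
    (conn → (Set.range a' ∩ Set.range p.a).Nonempty) →
    ∃ b' : Fin k' → B.Dom, GPair.mk k' a' b' ∈ I ∧ ∀ i j, p.a i = a' j → p.b i = b' j

/-- Back condition. -/
def StepBack (conn : Bool) (A B : Str) (I : Set (GPair A B)) (p : GPair A B) : Prop :=
  ∀ (k' : ℕ) (b' : Fin k' → B.Dom), B.GuardedTuple b' →
    (conn → (Set.range b' ∩ Set.range p.b).Nonempty) →
    ∃ a' : Fin k' → A.Dom, GPair.mk k' a' b' ∈ I ∧ ∀ i j, p.b i = b' j → p.a i = a' j

/-- `I` is a (connected, if `conn`) guarded Σ-bisimulation between `A` and `B`. -/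
def IsGBisim (conn : Bool) (sg : Set (ℕ × ℕ)) (A B : Str) (I : Set (GPair A B)) : Prop :=
  ∀ p ∈ I, A.GuardedTuple p.a ∧ B.GuardedTuple p.b ∧ PartialIso sg A B p.a p.b ∧
    StepForth conn A B I p ∧ StepBack conn A B I p

/-- `A,a⃗ ∼_{GF,Σ} B,b⃗` (`conn = false`) resp. `A,a⃗ ∼_{openGF,Σ} B,b⃗` (`conn = true`). -/
def GBisimilar (conn : Bool) (sg : Set (ℕ × ℕ)) (A : Str) {n : ℕ} (a : Fin n → A.Dom)
    (B : Str) (b : Fin n → B.Dom) : Prop :=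
  ∃ I : Set (GPair A B), IsGBisim conn sg A B I ∧ PartialIso sg A B a b ∧
    StepForth conn A B I ⟨n, a, b⟩ ∧ StepBack conn A B I ⟨n, a, b⟩

/-- A sequence `I_ℓ, …, I₀` witnessing (connected) guarded Σ `ℓ`-bisimilarity. -/
def IsGBisimSeq (conn : Bool) (sg : Set (ℕ × ℕ)) (A B : Str)
    (Is : ℕ → Set (GPair A B)) (ℓ : ℕ) : Prop :=
  (∀ i, i < ℓ → ∀ p ∈ Is i, A.GuardedTuple p.a ∧ B.GuardedTuple p.b) ∧
  (∀ i, i ≤ ℓ → ∀ p ∈ Is i, PartialIso sg A B p.a p.b) ∧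
  ∀ i, i < ℓ → ∀ p ∈ Is (i + 1), StepForth conn A B (Is i) p ∧ StepBack conn A B (Is i) p

/-- `A,a⃗ ∼^ℓ_{GF,Σ} B,b⃗` (`conn = false`) resp. `A,a⃗ ∼^ℓ_{openGF,Σ} B,b⃗` (`conn = true`). -/
def GLBisimilar (conn : Bool) (sg : Set (ℕ × ℕ)) (A : Str) {n : ℕ} (a : Fin n → A.Dom)
    (B : Str) (b : Fin n → B.Dom) (ℓ : ℕ) : Prop :=
  ∃ Is : ℕ → Set (GPair A B), IsGBisimSeq conn sg A B Is ℓ ∧ GPair.mk n a b ∈ Is ℓ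

/-! ## Guarded Σ ℓ-embeddings -/

/-- A pair of tuples: constants of a database and elements of a structure. -/
structure EPair (A : Str) : Type where
  k : ℕ
  c : Fin k → ℕ
  f : Fin k → A.Dom

/-- `p` is a partial embedding (injective partial homomorphism) from `D` into `A`. -/
def IsPartialEmbed (D : Database) (A : Str) (p : EPair A) : Prop :=
  (∀ i j, p.c i = p.c j ↔ p.f i = p.f j) ∧
  (∀ i, p.c i ∈ D.consts) ∧
  ∀ a ∈ D.atoms, ∀ g : Fin a.arity → Fin p.k, a.args = p.c ∘ g →
    A.rel a.arity a.rel (p.f ∘ g)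

/-- Guarded sets of a database. -/
def Database.GuardedSet (D : Database) (G : Set ℕ) : Prop :=
  (∃ c ∈ D.consts, G = {c}) ∨ ∃ a ∈ D.atoms, G = Set.range a.args

/-- `e` is a homomorphism from `D` onto `D'`. -/
def DbHomOnto (e : ℕ → ℕ) (D D' : Database) : Prop :=
  (∀ a ∈ D.atoms, a.mapC e ∈ D'.atoms) ∧ ∀ a' ∈ D'.atoms, ∃ a ∈ D.atoms, a.mapC e = a'

/-- `D,t⃗ ≼^ℓ_{openGF,Σ} A,b⃗`: there is a guarded Σ `ℓ`-embedding `(e, H)`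
between the pointed database `(D, t⃗)` and the pointed structure `(A, b⃗)`. -/
def GLEmbed (sg : Set (ℕ × ℕ)) (D : Database) {n : ℕ} (t : Fin n → ℕ)
    (A : Str) (b : Fin n → A.Dom) (ℓ : ℕ) : Prop :=
  ∃ (D' : Database) (e : ℕ → ℕ) (H : Set (EPair A)),
    DbHomOnto e D D' ∧
    (∀ p ∈ H, IsPartialEmbed D' A p) ∧
    EPair.mk n (e ∘ t) b ∈ H ∧
    (∀ G : Set ℕ, D'.GuardedSet G → ∃ p ∈ H, Set.range p.c = G) ∧
    ∀ p₁ ∈ H, ∀ p₂ ∈ H,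
      ∃ (m : ℕ) (j₁ : Fin m → Fin p₁.k) (j₂ : Fin m → Fin p₂.k),
        p₁.c ∘ j₁ = p₂.c ∘ j₂ ∧
        Set.range (p₁.c ∘ j₁) = Set.range p₁.c ∩ Set.range p₂.c ∧
        PartialIso sg A A (p₁.f ∘ j₁) (p₂.f ∘ j₂) ∧
        ∀ (k' : ℕ) (g : Fin k' → Fin m),
          Set.range (p₁.f ∘ j₁ ∘ g) = Set.range (p₁.f ∘ j₁) →
          GLBisimilar true sg A (p₁.f ∘ j₁ ∘ g) A (p₂.f ∘ j₂ ∘ g) ℓ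

/-! ## Gaifman graph of a structure -/

/-- Adjacency in the Gaifman graph of a structure. -/
def Str.Adj (A : Str) (d e : A.Dom) : Prop :=
  ∃ k R, ∃ t : Fin k → A.Dom, A.rel k R t ∧ d ∈ Set.range t ∧ e ∈ Set.range t

/-- `WithinDist A m d e`: `e` is at distance at most `m` from `d` in the
Gaifman graph of `A`. -/
def WithinDist (A : Str) : ℕ → A.Dom → A.Dom → Prop
  | 0, d, e => d = e
  | m + 1, d, e => d = e ∨ ∃ c, A.Adj d c ∧ WithinDist A m c e

/-! ## K-types for GF-KBs -/

/-- `cl(K)` for a GF-KB: the formulas of the ontology, equalities between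
distinct variables, and for every `R ∈ sig(K)` of arity `k` the formulas
`R(x⃗_k)`, `∃y⃗₁(R(x⃗_k) ∧ ¬ x_u = x_w)` and `∃y⃗₂ R(x⃗_k)` (`[y⃗₂] ⊆ [x⃗_k]∖{x_u,x_w}`),
closed under subformulas and single negation. -/
def KB.clGFbase (K : KB) : Set Fml :=
  K.onto ∪
  {φ | ∃ x y : ℕ, x ≠ y ∧ φ = Fml.eq x y} ∪
  {φ | ∃ k R, (k, R) ∈ K.sig ∧
    (φ = baseAtom k R ∨
     (∃ u w : ℕ, u < k ∧ w < k ∧ u ≠ w ∧ φ = connFml k R u w) ∨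
     ∃ u w : ℕ, u < k ∧ w < k ∧ u ≠ w ∧
       ∃ ys : List ℕ, (∀ z ∈ ys, z < k ∧ z ≠ u ∧ z ≠ w) ∧ φ = exList ys (baseAtom k R))}

def KB.clGF (K : KB) : Set Fml :=
  (⋃ φ ∈ K.clGFbase, φ.subfmls) ∪ Fml.neg '' (⋃ φ ∈ K.clGFbase, φ.subfmls)

/-- `tp_K(A, b⃗)`: the `K`-type of the tuple `b⃗` in `A`, represented as the set
of pairs `(φ, σ)` with `φ ∈ cl(K)` and `σ` a substitution of the variables of
`φ` by positions of `b⃗` making `φ` true at `b⃗`. -/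
def KB.tpGF (K : KB) (A : Str) {m : ℕ} (b : Fin m → A.Dom) : Set (Fml × (ℕ → Fin m)) :=
  {p | p.1 ∈ K.clGF ∧ p.1.Sat A fun x => b (p.2 x)}

/-- `Φ` is a `K`-type (of tuples of length `m`). -/
def KB.IsGFTypeAt (K : KB) {m : ℕ} (Φ : Set (Fml × (ℕ → Fin m))) : Prop :=
  ∃ A : Str, A.IsModel K ∧ ∃ b : Fin m → A.Dom, K.tpGF A b = Φ

/-- `Φ` is realizable in `K, t⃗`. -/
def KB.GFRealizableAt (K : KB) {m : ℕ} (t : Fin m → ℕ) (Φ : Set (Fml × (ℕ → Fin m))) : Prop :=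
  ∃ A : Str, A.IsModel K ∧ K.tpGF A (fun i => A.const (t i)) = Φ

/-- The tuple `w⃗` satisfies all (substituted) formulas of `Φ` in `A`. -/
def TypeSat (A : Str) {m : ℕ} (w : Fin m → A.Dom) (Φ : Set (Fml × (ℕ → Fin m))) : Prop :=
  ∀ p ∈ Φ, p.1.Sat A fun x => w (p.2 x)

/-- A `K`-type `Φ(x⃗)` is connected: it contains a formula `∃y⃗₁(R(x⃗) ∧ x_u ≠ x_w)`. -/
def GFTypeConnected {m : ℕ} (Φ : Set (Fml × (ℕ → Fin m))) : Prop :=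
  ∃ k R u w, ∃ σ : ℕ → Fin m, u < k ∧ w < k ∧ u ≠ w ∧ (connFml k R u w, σ) ∈ Φ

/-- A `K`-type `Φ(x⃗)` is guarded: it contains the atom `R(x⃗)` (on the full tuple). -/
def GFTypeGuarded {m : ℕ} (Φ : Set (Fml × (ℕ → Fin m))) : Prop :=
  ∃ R, ∃ σ : ℕ → Fin m, (∀ i : Fin m, σ i.1 = i) ∧ (baseAtom m R, σ) ∈ Φ

/-- A `K`-type is non-unary: it contains `¬ (x = y)` for (substituted-)distinct variables. -/
def GFTypeNonUnary {m : ℕ} (Φ : Set (Fml × (ℕ → Fin m))) : Prop :=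
  ∃ x y, ∃ σ : ℕ → Fin m, σ x ≠ σ y ∧ (Fml.neg (.eq x y), σ) ∈ Φ

/-- The restriction of a type `Φ(x⃗)` to the single variable `x_j`. -/
def GFRestrict1 {m : ℕ} (Φ : Set (Fml × (ℕ → Fin m))) (j : Fin m) :
    Set (Fml × (ℕ → Fin 1)) :=
  {q | ∃ σ : ℕ → Fin m, (q.1, σ) ∈ Φ ∧ ∀ x ∈ q.1.free, σ x = j}

/-- A `K`-type is openGF-complete: any two pointed models of `K` realizing it
are connected guarded `sig(K)`-bisimilar. -/
def KB.OpenGFComplete (K : KB) {m : ℕ} (Φ : Set (Fml × (ℕ → Fin m))) : Prop :=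
  ∀ A B : Str, A.IsModel K → B.IsModel K → ∀ (a : Fin m → A.Dom) (b : Fin m → B.Dom),
    K.tpGF A a = Φ → K.tpGF B b = Φ → GBisimilar true K.sig A a B b

/-! ## K-types with explicit variable tuples, and witness sequences -/

/-- A `K`-type together with an explicit tuple of distinct variables. -/
structure GFTypeV : Type where
  m : ℕ
  xs : Fin m → ℕ
  xs_inj : Function.Injective xs
  Phi : Set (Fml × (ℕ → Fin m))

/-- The type `T` is satisfied under the assignment `μ` of its variables. -/
def GFTypeV.SatUnder (T : GFTypeV) (A : Str) (μ : ℕ → A.Dom) : Prop :=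
  ∀ p ∈ T.Phi, p.1.Sat A fun x => μ (T.xs (p.2 x))

/-- `T` is a `K`-type. -/
def GFTypeV.IsTypeOf (T : GFTypeV) (K : KB) : Prop := K.IsGFTypeAt T.Phi

/-- Two types (with explicit variables) are coherent: some model of `K`
satisfies their union under a common assignment. -/
def GFCoherent (K : KB) (T₁ T₂ : GFTypeV) : Prop :=
  ∃ A : Str, A.IsModel K ∧ ∃ μ : ℕ → A.Dom, T₁.SatUnder A μ ∧ T₂.SatUnder A μ

/-- The sequence `Φ₀(x⃗₀),…,Φ_{n+1}(x⃗_{n+1})` witnesses openGF-incompleteness of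
the `K`-type `Φ(x)` with one free variable. -/
def GFWitSeq (K : KB) (Φ : Set (Fml × (ℕ → Fin 1))) (n : ℕ)
    (Ts : Fin (n + 2) → GFTypeV) : Prop :=
  (∃ j : Fin (Ts 0).m, GFRestrict1 (Ts 0).Phi j = Φ) ∧
  (∀ i : Fin (n + 2), (Ts i).IsTypeOf K ∧ GFTypeGuarded (Ts i).Phi ∧ GFTypeNonUnary (Ts i).Phi) ∧
  (∀ i : Fin (n + 1),
    (Set.range (Ts i.castSucc).xs ∩ Set.range (Ts i.succ).xs).Nonempty) ∧
  (∀ i : Fin (n + 1), GFCoherent K (Ts i.castSucc) (Ts i.succ)) ∧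
  ∃ A : Str, A.IsModel K ∧ ∃ μ : ℕ → A.Dom,
    (Ts ⟨n, by omega⟩).SatUnder A μ ∧
    ¬ ∃ μ' : ℕ → A.Dom,
        (∀ x, x ∈ Set.range (Ts ⟨n, by omega⟩).xs → x ∈ Set.range (Ts ⟨n + 1, by omega⟩).xs →
          μ' x = μ x) ∧
        (Ts ⟨n + 1, by omega⟩).SatUnder A μ'

/-! ## Relativization and finite controllability -/

/-- `L` has the relativization property. -/
def RelativizationProperty (L : Set Fml) : Prop :=
  ∀ φ ∈ L, φ.free = ∅ → ∀ c : ℕ, ((1 : ℕ), c) ∉ φ.sig →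
    ∃ φ' ∈ L, φ'.free = ∅ ∧ ∀ (B : Str) (v : ℕ → B.Dom),
      (φ'.Sat B v ↔ φ.SatIn B {d | B.rel 1 c ![d]} v)

/-- Evaluating queries from `Q` is finitely controllable on `L`-KBs. -/
def FinitelyControllable (Q L : Set Fml) : Prop :=
  ∀ K : KB, (∀ φ ∈ K.onto, φ ∈ L) → (∀ φ ∈ K.onto, φ.free = ∅) →
  ∀ (n : ℕ) (q : Fml), q ∈ Q → (∀ m ∈ q.free, m < n) →
  ∀ c : Fin n → ℕ,
  (∃ A : Str, A.IsModel K ∧ ∃ v : ℕ → A.Dom,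
      (∀ i : Fin n, v i.1 = A.const (c i)) ∧ ¬ q.Sat A v) →
  ∃ A : Str, Finite A.Dom ∧ A.IsModel K ∧ ∃ v : ℕ → A.Dom,
      (∀ i : Fin n, v i.1 = A.const (c i)) ∧ ¬ q.Sat A v

/-! For finitely many positive examples `P`, the canonical UCQ
`q_P = ⋁_{a⃗ ∈ P} φ_{D_{con(a⃗)}, a⃗}` uses only symbols of `K` and is entailed at every `a⃗ ∈ P`.
If `K ⊨ q_P(b⃗)`, every model `A` of `K` receives a homomorphism from some `D_{con(a⃗)}` sending
`a⃗` to `b⃗`. Reinterpreting the constants of that Gaifman component along the homomorphism yields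
another model of `K`: the ontology mentions no constants, and a database atom meeting the
component lies inside it. In this model `a⃗` denotes `b⃗`, so every formula entailed at all
positive examples is entailed at `b⃗`. Hence `q_P` separates `(K, P, N)` as soon as any
formula does, and `q_P` belongs to every fragment containing the UCQs. -/

lemma sat_exList {A : Str} {φ : Fml} {ys : List ℕ} {v : ℕ → A.Dom} :
    (exList ys φ).Sat A v ↔ ∃ v' : ℕ → A.Dom, (∀ x, x ∉ ys → v' x = v x) ∧ φ.Sat A v' := by
  induction ys generalizing v with
  | nil =>
    refine ⟨fun h => ⟨v, fun _ _ => rfl, h⟩, ?_⟩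
    rintro ⟨v', hv', h⟩
    rwa [funext fun x => hv' x List.not_mem_nil] at h
  | cons y ys ih =>
    change (∃ d, (exList ys φ).Sat A (Function.update v y d)) ↔ _
    simp only [ih]
    constructor
    · rintro ⟨d, v', hv', h⟩
      refine ⟨v', fun x hx => ?_, h⟩
      rw [List.mem_cons, not_or] at hx
      rw [hv' x hx.2, Function.update_of_ne hx.1]
    · rintro ⟨v', hv', h⟩
      refine ⟨v' y, v', fun x hx => ?_, h⟩
      by_cases hxy : x = y
      · subst hxy; simp
      · rw [Function.update_of_ne hxy, hv' x (by simp [hxy, hx])]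

lemma free_exList (φ : Fml) (ys : List ℕ) :
    (exList ys φ).free = φ.free \ {y | y ∈ ys} := by
  induction ys with
  | nil => simp [exList]
  | cons y ys ih =>
    ext x
    change x ∈ (exList ys φ).free \ {y} ↔ _
    rw [ih]
    simp only [Set.mem_sdiff, Set.mem_singleton_iff, Set.mem_ofPred_eq, List.mem_cons]
    tauto

lemma eqVars_exList (φ : Fml) (ys : List ℕ) : (exList ys φ).eqVars = φ.eqVars := by
  induction ys <;> simp_all [exList, Fml.eqVars]

lemma sig_exList (φ : Fml) (ys : List ℕ) : (exList ys φ).sig = φ.sig := by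
  induction ys <;> simp_all [exList, Fml.sig]

lemma isCQ_exList {φ : Fml} (hφ : IsCQ φ) {ys : List ℕ} (hys : ∀ y ∈ ys, y ∉ φ.eqVars) :
    IsCQ (exList ys φ) := by
  induction ys with
  | nil => exact hφ
  | cons y ys ih =>
    refine IsCQ.ex y (ih fun z hz => hys z (List.mem_cons_of_mem _ hz)) ?_
    change y ∉ (exList ys φ).eqVars
    rw [eqVars_exList]
    exact hys y List.mem_cons_self

lemma sat_bigAnd (A : Str) (l : List Fml) (v : ℕ → A.Dom) :
    (bigAnd l).Sat A v ↔ ∀ φ ∈ l, φ.Sat A v := by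
  fun_induction bigAnd l <;> simp_all [Fml.Sat]

lemma sat_bigOr (A : Str) (l : List Fml) (v : ℕ → A.Dom) :
    (bigOr l).Sat A v ↔ ∃ φ ∈ l, φ.Sat A v := by
  fun_induction bigOr l <;> simp_all [Fml.Sat]

lemma free_bigAnd {l : List Fml} (hl : l ≠ []) : (bigAnd l).free = ⋃ φ ∈ l, φ.free := by
  fun_induction bigAnd l <;> simp_all [Fml.free]

lemma free_bigOr {l : List Fml} {F : Set ℕ} (hl : l ≠ []) (hF : ∀ φ ∈ l, φ.free = F) :
    (bigOr l).free = F := by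
  fun_induction bigOr l <;> simp_all [Fml.free]

lemma eqVars_bigAnd_subset {S : Set ℕ} (h0 : 0 ∈ S) {l : List Fml}
    (hl : ∀ φ ∈ l, φ.eqVars ⊆ S) : (bigAnd l).eqVars ⊆ S := by
  fun_induction bigAnd l <;> simp_all [Fml.eqVars]

lemma sig_bigAnd_subset {S : Set (ℕ × ℕ)} {l : List Fml} (hl : ∀ φ ∈ l, φ.sig ⊆ S) :
    (bigAnd l).sig ⊆ S := by
  fun_induction bigAnd l <;> simp_all [Fml.sig]

lemma sig_bigOr_subset {S : Set (ℕ × ℕ)} {l : List Fml} (hl : ∀ φ ∈ l, φ.sig ⊆ S) :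
    (bigOr l).sig ⊆ S := by
  fun_induction bigOr l <;> simp_all [Fml.sig]

lemma isQFConj_bigAnd {l : List Fml} (hl : ∀ φ ∈ l, IsAtomic φ) : IsQFConj (bigAnd l) := by
  fun_induction bigAnd l with
  | case1 => exact .atom (.eq 0 0)
  | case2 φ => exact .atom (hl φ (by simp))
  | case3 φ ψ rest ih => exact .and (.atom (hl φ (by simp))) (ih fun χ hχ => hl χ (by simp [hχ]))

lemma isUCQ_bigOr {l : List Fml} {F : Set ℕ} (hl : l ≠ []) (hcq : ∀ φ ∈ l, IsCQ φ)
    (hF : ∀ φ ∈ l, φ.free = F) : IsUCQ (bigOr l) := by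
  fun_induction bigOr l with
  | case1 => exact absurd rfl hl
  | case2 φ => exact .cq (hcq φ (by simp))
  | case3 φ ψ rest ih =>
    have hF' : ∀ χ ∈ ψ :: rest, χ.free = F := fun χ hχ => hF χ (by simp [hχ])
    refine .or (.cq (hcq φ (by simp))) (ih (by simp) (fun χ hχ => hcq χ (by simp [hχ])) hF') ?_
    rw [hF φ (by simp), free_bigOr (by simp) hF']

lemma exists_varOf_lt {n : ℕ} {t : Fin n → ℕ} {c : ℕ} (h : c ∈ Set.range t) :
    ∃ hlt : varOf t c < n, t ⟨varOf t c, hlt⟩ = c := by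
  rw [varOf, if_pos (Set.mem_range.mp h)]
  obtain ⟨i, hi⟩ := h
  exact Nat.sInf_mem (s := {m | ∃ h : m < n, t ⟨m, h⟩ = c}) ⟨i, i.2, hi⟩

lemma varOf_of_notMem_range {n : ℕ} {t : Fin n → ℕ} {c : ℕ} (h : c ∉ Set.range t) :
    varOf t c = n + c := by
  rw [varOf, if_neg (mt Set.mem_range.mpr h)]

namespace Database

variable (D : Database) {n : ℕ} (t : Fin n → ℕ)

noncomputable def canonQVars : List ℕ :=
  (D.qvars_finite t).toFinset.toList.map fun c => n + c

noncomputable def canonConjuncts : List Fml :=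
  (D.finite.toFinset.toList.map fun a => Fml.rel a.arity a.rel fun i => varOf t (a.args i)) ++
    (List.finRange n ×ˢ List.finRange n).filterMap fun p =>
      if t p.1 = t p.2 then some (Fml.eq p.1.1 p.2.1) else none

lemma canonCQ_eq : canonCQ D t = exList (D.canonQVars t) (bigAnd (D.canonConjuncts t)) := rfl

variable {D t}

lemma mem_canonQVars {x : ℕ} :
    x ∈ D.canonQVars t ↔ ∃ c ∈ D.consts, c ∉ Set.range t ∧ n + c = x := by
  simp [canonQVars, and_assoc]

lemma le_of_mem_canonQVars {x : ℕ} (hx : x ∈ D.canonQVars t) : n ≤ x := by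
  obtain ⟨c, -, -, rfl⟩ := mem_canonQVars.mp hx
  omega

lemma mem_canonConjuncts {ψ : Fml} :
    ψ ∈ D.canonConjuncts t ↔
      (∃ a ∈ D.atoms, ψ = Fml.rel a.arity a.rel fun i => varOf t (a.args i)) ∨
        ∃ i j : Fin n, t i = t j ∧ ψ = Fml.eq i j := by
  simp only [canonConjuncts, List.mem_append, List.mem_map, Finset.mem_toList,
    Set.Finite.mem_toFinset, List.mem_filterMap, List.mem_product, List.mem_finRange,
    true_and, Prod.exists]
  refine or_congr (by simp only [eq_comm]) (exists₂_congr fun i j => ?_)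
  split_ifs with h <;> simp [h, eq_comm]

lemma varOf_lt_or_mem_canonQVars {c : ℕ} (hc : c ∈ D.consts) :
    varOf t c < n ∨ varOf t c ∈ D.canonQVars t := by
  by_cases hct : c ∈ Set.range t
  · exact .inl (exists_varOf_lt hct).1
  · exact .inr (mem_canonQVars.mpr ⟨c, hc, hct, (varOf_of_notMem_range hct).symm⟩)


lemma eq_mem_canonConjuncts {i j : Fin n} (hij : t i = t j) :
    Fml.eq i j ∈ D.canonConjuncts t :=
  mem_canonConjuncts.mpr (.inr ⟨i, j, hij, rfl⟩)

lemma free_canonCQ (hn : 0 < n) : (canonCQ D t).free = {m | m < n} := by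
  have hne : D.canonConjuncts t ≠ [] :=
    List.ne_nil_of_mem (eq_mem_canonConjuncts (i := ⟨0, hn⟩) rfl)
  rw [canonCQ_eq, free_exList, free_bigAnd hne]
  ext x
  simp only [Set.mem_sdiff, Set.mem_iUnion, Set.mem_ofPred_eq, exists_prop]
  constructor
  · rintro ⟨⟨ψ, hψ, hx⟩, hxq⟩
    rcases mem_canonConjuncts.mp hψ with ⟨a, ha, rfl⟩ | ⟨i, j, -, rfl⟩
    · obtain ⟨i, rfl⟩ := hx
      exact (varOf_lt_or_mem_canonQVars (Set.mem_biUnion ha ⟨i, rfl⟩)).resolve_right hxq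
    · rcases hx with rfl | rfl
      exacts [i.2, j.2]
  · intro hx
    exact ⟨⟨_, eq_mem_canonConjuncts (i := ⟨x, hx⟩) rfl, .inl rfl⟩,
      fun hxq => (le_of_mem_canonQVars hxq).not_gt hx⟩

lemma isCQ_canonCQ (hn : 0 < n) : IsCQ (canonCQ D t) := by
  have hatom : ∀ ψ ∈ D.canonConjuncts t, IsAtomic ψ := fun ψ hψ => by
    rcases mem_canonConjuncts.mp hψ with ⟨a, -, rfl⟩ | ⟨i, j, -, rfl⟩
    exacts [.rel _ _ _, .eq _ _]
  have heqVars : (bigAnd (D.canonConjuncts t)).eqVars ⊆ {m | m < n} :=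
    eqVars_bigAnd_subset hn fun ψ hψ => by
      rcases mem_canonConjuncts.mp hψ with ⟨a, -, rfl⟩ | ⟨i, j, -, rfl⟩
      · simp [Fml.eqVars]
      · rintro x (rfl | rfl)
        exacts [i.2, j.2]
  exact isCQ_exList (.base (isQFConj_bigAnd hatom)) fun y hy hyeq =>
    (le_of_mem_canonQVars hy).not_gt (heqVars hyeq)

lemma sig_canonCQ_subset : (canonCQ D t).sig ⊆ D.sig := by
  rw [canonCQ_eq, sig_exList]
  refine sig_bigAnd_subset fun ψ hψ => ?_
  rcases mem_canonConjuncts.mp hψ with ⟨a, ha, rfl⟩ | ⟨i, j, -, rfl⟩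
  · rintro _ rfl
    exact ⟨a, ha, rfl⟩
  · simp [Fml.sig]

lemma sat_canonCQ_iff {A : Str} {v : ℕ → A.Dom} :
    (canonCQ D t).Sat A v ↔ PointedHom D t A fun i => v i := by
  rw [canonCQ_eq, sat_exList]
  constructor
  · rintro ⟨v', hv', hsat⟩
    rw [sat_bigAnd] at hsat
    refine ⟨fun c => v' (varOf t c),
      fun a ha => hsat _ (mem_canonConjuncts.mpr (.inl ⟨a, ha, rfl⟩)), fun i => ?_⟩
    obtain ⟨hlt, hj⟩ := exists_varOf_lt (Set.mem_range_self (f := t) i)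
    have heq : v' (varOf t (t i)) = v' i := hsat _ (eq_mem_canonConjuncts (i := ⟨_, hlt⟩) hj)
    change v' (varOf t (t i)) = v i
    rw [heq, hv' _ fun hi => (le_of_mem_canonQVars hi).not_gt i.2]
  · rintro ⟨h, hhom, hpt⟩
    replace hpt : ∀ i : Fin n, h (t i) = v i := hpt
    have hfree : ∀ x < n, x ∉ D.canonQVars t := fun x hx hq => (le_of_mem_canonQVars hq).not_gt hx
    set v' : ℕ → A.Dom := fun x => if x ∈ D.canonQVars t then h (x - n) else v x
    have hv'var : ∀ c ∈ D.consts, v' (varOf t c) = h c := by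
      intro c hc
      by_cases hct : c ∈ Set.range t
      · obtain ⟨hlt, hj⟩ := exists_varOf_lt hct
        simp only [v', if_neg (hfree _ hlt)]
        rw [← hpt ⟨_, hlt⟩, hj]
      · have hq := (varOf_lt_or_mem_canonQVars (t := t) hc).resolve_left
          (by rw [varOf_of_notMem_range hct]; omega)
        rw [varOf_of_notMem_range hct] at hq ⊢
        simp only [v', if_pos hq, Nat.add_sub_cancel_left]
    refine ⟨v', fun x hx => if_neg hx, (sat_bigAnd _ _ _).mpr fun ψ hψ => ?_⟩
    rcases mem_canonConjuncts.mp hψ with ⟨a, ha, rfl⟩ | ⟨i, j, hij, rfl⟩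
    · change A.rel a.arity a.rel fun i => v' (varOf t (a.args i))
      simp only [fun i => hv'var _ (Set.mem_biUnion ha ⟨i, rfl⟩)]
      exact hhom a ha
    · change v' i = v' j
      simp only [v', if_neg (hfree _ i.2), if_neg (hfree _ j.2)]
      rw [← hpt i, ← hpt j, hij]

end Database

namespace KB

variable (K : KB) {n : ℕ} {P : Set (Fin n → ℕ)} (hP : P.Finite)

lemma mem_canonUCQ_disjuncts {ψ : Fml} :
    ψ ∈ hP.toFinset.toList.map (fun t => canonCQ (K.db.conRestrict t) t) ↔
      ∃ t ∈ P, canonCQ (K.db.conRestrict t) t = ψ := by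
  simp

variable {K}

lemma isUCQ_canonUCQ (hn : 0 < n) (hPne : P.Nonempty) : IsUCQ (canonUCQ K P hP) := by
  obtain ⟨t, ht⟩ := hPne
  refine isUCQ_bigOr (F := {m | m < n})
    (List.ne_nil_of_mem ((K.mem_canonUCQ_disjuncts hP).mpr ⟨t, ht, rfl⟩)) ?_ ?_
  all_goals
    intro ψ hψ
    obtain ⟨t, -, rfl⟩ := (K.mem_canonUCQ_disjuncts hP).mp hψ
  exacts [Database.isCQ_canonCQ hn, Database.free_canonCQ hn]

lemma free_canonUCQ (hn : 0 < n) (hPne : P.Nonempty) :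
    (canonUCQ K P hP).free = {m | m < n} := by
  obtain ⟨t, ht⟩ := hPne
  refine free_bigOr (List.ne_nil_of_mem ((K.mem_canonUCQ_disjuncts hP).mpr ⟨t, ht, rfl⟩))
    fun ψ hψ => ?_
  obtain ⟨t, -, rfl⟩ := (K.mem_canonUCQ_disjuncts hP).mp hψ
  exact Database.free_canonCQ hn

lemma sig_canonUCQ_subset : (canonUCQ K P hP).sig ⊆ K.sig := by
  refine sig_bigOr_subset fun ψ hψ => ?_
  obtain ⟨t, -, rfl⟩ := (K.mem_canonUCQ_disjuncts hP).mp hψ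
  refine Database.sig_canonCQ_subset.trans ?_
  rintro _ ⟨a, ha, rfl⟩
  exact .inr ⟨a, ha.1, rfl⟩

lemma sat_canonUCQ_iff {A : Str} {v : ℕ → A.Dom} :
    (canonUCQ K P hP).Sat A v ↔ ∃ t ∈ P, PointedHom (K.db.conRestrict t) t A fun i => v i := by
  rw [canonUCQ, sat_bigOr]
  simp only [K.mem_canonUCQ_disjuncts hP]
  constructor
  · rintro ⟨_, ⟨t, ht, rfl⟩, hsat⟩
    exact ⟨t, ht, Database.sat_canonCQ_iff.mp hsat⟩
  · rintro ⟨t, ht, hhom⟩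
    exact ⟨_, ⟨t, ht, rfl⟩, Database.sat_canonCQ_iff.mpr hhom⟩

lemma entails_canonUCQ {t : Fin n → ℕ} (ht : t ∈ P) : K.entails (canonUCQ K P hP) t :=
  fun A hA _ hv => (sat_canonUCQ_iff hP).mpr
    ⟨t, ht, A.const, fun a ha => hA.2 a ha.1, fun i => (hv i).symm⟩

end KB

def Str.withConst (A : Str) (c : ℕ → A.Dom) : Str := { A with const := c }

lemma Fml.sat_withConst (A : Str) (c : ℕ → A.Dom) (φ : Fml) (v : ℕ → A.Dom) :
    φ.Sat (A.withConst c) v ↔ φ.Sat A v := by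
  induction φ generalizing v <;> simp_all [Fml.Sat, Str.withConst]

lemma Str.IsModel.exists_withConst_isModel {A : Str} {K : KB} (hA : A.IsModel K) {n : ℕ}
    {t : Fin n → ℕ} {h : ℕ → A.Dom} (hh : DbHom (K.db.conRestrict t) A h) :
    ∃ c : ℕ → A.Dom, (A.withConst c).IsModel K ∧ ∀ i, c (t i) = h (t i) := by
  classical
  let reach (d : ℕ) : Prop := ∃ c₀ ∈ Set.range t, Relation.ReflTransGen K.db.adj c₀ d
  refine ⟨fun d => if reach d then h d else A.const d,
    ⟨fun φ hφ v => (Fml.sat_withConst A _ φ v).mpr (hA.1 φ hφ v), fun a ha => ?_⟩,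
    fun i => if_pos ⟨t i, ⟨i, rfl⟩, .refl⟩⟩
  change A.rel a.arity a.rel fun i => if reach (a.args i) then h (a.args i) else A.const (a.args i)
  by_cases hr : ∃ i₀, reach (a.args i₀)
  · obtain ⟨i₀, c₀, hc₀, hrt⟩ := hr
    have hall : ∀ i, reach (a.args i) := fun i =>
      ⟨c₀, hc₀, hrt.tail ⟨a, ha, ⟨i₀, rfl⟩, ⟨i, rfl⟩⟩⟩
    simp only [hall, if_true]
    exact hh a ⟨ha, c₀, hc₀, a.args i₀, ⟨i₀, rfl⟩, hrt⟩
  · simp only [not_exists.mp hr, if_false]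
    exact hA.2 a ha

theorem KB.entails_of_entails_canonUCQ {K : KB} {n : ℕ} {P : Set (Fin n → ℕ)} (hP : P.Finite)
    {φ : Fml} (hφ : ∀ a ∈ P, K.entails φ a) {b : Fin n → ℕ}
    (hb : K.entails (canonUCQ K P hP) b) : K.entails φ b := by
  intro A hA v hv
  obtain ⟨a, ha, h, hh, hav⟩ := (KB.sat_canonUCQ_iff hP).mp (hb A hA v hv)
  obtain ⟨c, hc, hca⟩ := hA.exists_withConst_isModel hh
  exact (Fml.sat_withConst A c φ v).mp (hφ a ha _ hc v fun i => ((hca i).trans (hav i)).symm)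

lemma Separates.arity_pos {K : KB} {n : ℕ} {P N : Set (Fin n → ℕ)} {φ : Fml}
    (hφ : Separates K P N φ) (hP : P.Nonempty) (hN : N.Nonempty) : 0 < n := by
  obtain ⟨a, ha⟩ := hP
  obtain ⟨b, hb⟩ := hN
  refine Nat.pos_of_ne_zero fun hn => hφ.2.2 b hb ?_
  subst hn
  exact Subsingleton.elim a b ▸ hφ.2.1 a ha

lemma KB.finite_of_forall_mem_consts (K : KB) {n : ℕ} {P : Set (Fin n → ℕ)}
    (hP : ∀ t ∈ P, ∀ i, t i ∈ K.db.consts) : P.Finite :=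
  (Set.Finite.pi fun _ => K.db.consts_finite).subset fun t ht i _ => hP t ht i

theorem nonProjSeparable_of_separates {LS : Set Fml} (hLS : UCQs ⊆ LS) {n : ℕ} {K : KB}
    {P N : Set (Fin n → ℕ)} (hPne : P.Nonempty) (hNne : N.Nonempty)
    (hPc : ∀ t ∈ P, ∀ i, t i ∈ K.db.consts) {φ : Fml} (hφ : Separates K P N φ) :
    NonProjSeparable LS K P N := by
  have hn := hφ.arity_pos hPne hNne
  have hP := K.finite_of_forall_mem_consts hPc
  refine ⟨canonUCQ K P hP, hLS (KB.isUCQ_canonUCQ hP hn hPne), KB.sig_canonUCQ_subset hP,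
    fun m hm => by rwa [KB.free_canonUCQ hP hn hPne] at hm, fun t ht => KB.entails_canonUCQ hP ht,
    fun b hb hq => hφ.2.2 b hb (KB.entails_of_entails_canonUCQ hP hφ.2.1 hq)⟩

/-- for fragments containing all UCQs, projective and
non-projective (FO,L_S)-separability coincide, and all such separation
languages have the same separating power on labeled FO-KBs. -/
theorem statement_1 :
    (∀ LS : Set Fml, IsFragment LS → UCQs ⊆ LS →
      ∀ (n : ℕ) (K : KB), (∀ φ ∈ K.onto, φ.free = ∅) →
      ∀ P N : Set (Fin n → ℕ), P.Nonempty → N.Nonempty →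
        (∀ t ∈ P, ∀ i : Fin n, t i ∈ K.db.consts) →
        (∀ t ∈ N, ∀ i : Fin n, t i ∈ K.db.consts) →
        (ProjSeparable LS K P N ↔ NonProjSeparable LS K P N)) ∧
    (∀ LS LS' : Set Fml, IsFragment LS → UCQs ⊆ LS → IsFragment LS' → UCQs ⊆ LS' →
      ∀ (n : ℕ) (K : KB), (∀ φ ∈ K.onto, φ.free = ∅) →
      ∀ P N : Set (Fin n → ℕ), P.Nonempty → N.Nonempty →
        (∀ t ∈ P, ∀ i : Fin n, t i ∈ K.db.consts) →
        (∀ t ∈ N, ∀ i : Fin n, t i ∈ K.db.consts) →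
        (NonProjSeparable LS K P N ↔ NonProjSeparable LS' K P N)) := by
  constructor
  · intro LS _ hLS n K _ P N hP hN hPc _
    exact ⟨fun ⟨_, _, hφ⟩ => nonProjSeparable_of_separates hLS hP hN hPc hφ,
      fun ⟨φ, hφL, _, hφ⟩ => ⟨φ, hφL, hφ⟩⟩
  · intro LS LS' _ hLS _ hLS' n K _ P N hP hN hPc _
    exact ⟨fun ⟨_, _, _, hφ⟩ => nonProjSeparable_of_separates hLS' hP hN hPc hφ,
      fun ⟨_, _, _, hφ⟩ => nonProjSeparable_of_separates hLS hP hN hPc hφ⟩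

end Sep
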